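/- With notation as above, every eigenvalue of the adjacency matrix of the tournament T_p^m(S) is of the form Σ_{s∈S} ψ(s) for an additive character ψ of F_p; consequently λ(T_p^m(S)) ≤ ((m−1)√p + 1)/2 ≤ m√p/2. -/

import Mathlib

/-
An eigenvector `v` of the circulant matrix `x, y ↦ [x - y ∈ S]` has a nonzero Fourier coefficient
`∑ₓ ψ(x) v(x)` for some additive character `ψ`, and the matrix acts on that coefficient by the
factor `∑_{s ∈ S} ψ(s)`, which is therefore the eigenvalue.

For the bound, since `S` is a union of cosets of the `m`-th powers, `x ↦ a x^m` permutes `S` for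
`x ≠ 0`, so summing the Weil sums `∑ₓ ψ(a x^m)` over `a ∈ S` gives `|S| + (p - 1) μ`, which is
`|S| (1 + 2μ)` because `p = 2|S| + 1`. Hence `|1 + 2μ| ≤ (m - 1)√p` whenever `ψ ≠ 1`, i.e.
whenever `μ ≠ |S| = (p - 1)/2`.
-/

attribute [local instance] Classical.propDecidable

/-- The adjacency matrix over `ℂ` of the tournament `T_p^m(S)` on `F_p` with edges
`(x,y)` for `x - y ∈ S`. -/
noncomputable def adjTpm (p : ℕ) [NeZero p] (S : Finset (ZMod p)) :
    Matrix (ZMod p) (ZMod p) ℂ :=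
  fun x y => if x - y ∈ S then 1 else 0

/-- `μ` is an eigenvalue of the matrix `M`. -/
def IsEigenvalue {p : ℕ} [NeZero p] (M : Matrix (ZMod p) (ZMod p) ℂ) (μ : ℂ) : Prop :=
  ∃ v : ZMod p → ℂ, v ≠ 0 ∧ M.mulVec v = μ • v

open Finset
open scoped Pointwise

section AddCommGroup

variable {G : Type*} [AddCommGroup G] [Fintype G]

theorem AddChar.exists_sum_mul_ne_zero {v : G → ℂ} (hv : v ≠ 0) :
    ∃ ψ : AddChar G ℂ, ∑ x, ψ x * v x ≠ 0 := by
  by_contra! h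
  apply hv
  funext y
  have inversion : ∑ ψ : AddChar G ℂ, ψ (-y) * ∑ x, ψ x * v x = Fintype.card G * v y := by
    simp_rw [mul_sum, ← mul_assoc, ← AddChar.map_add_eq_mul]
    rw [sum_comm]
    simp_rw [← sum_mul, AddChar.sum_apply_eq_ite, neg_add_eq_zero, ite_mul, zero_mul,
      sum_ite_eq, if_pos (mem_univ y)]
  simpa [h] using inversion.symm

theorem AddChar.sum_mul_sum_sub (ψ : AddChar G ℂ) (S : Finset G) (v : G → ℂ) :
    ∑ x, ψ x * ∑ s ∈ S, v (x - s) = (∑ s ∈ S, ψ s) * ∑ x, ψ x * v x := by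
  rw [sum_mul]
  simp_rw [mul_sum]
  rw [sum_comm]
  refine sum_congr rfl fun s _ => ?_
  rw [← Equiv.sum_comp (Equiv.addRight s)]
  simp only [Equiv.coe_addRight, add_sub_cancel_right, AddChar.map_add_eq_mul]
  exact sum_congr rfl fun x _ => by ring

theorem exists_addChar_eq_sum_of_sum_sub_eq_mul {S : Finset G} {v : G → ℂ} (hv : v ≠ 0)
    {μ : ℂ} (hμ : ∀ x, ∑ s ∈ S, v (x - s) = μ * v x) :
    ∃ ψ : AddChar G ℂ, μ = ∑ s ∈ S, ψ s := by
  obtain ⟨ψ, hψ⟩ := AddChar.exists_sum_mul_ne_zero hv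
  refine ⟨ψ, mul_right_cancel₀ hψ ?_⟩
  calc μ * ∑ x, ψ x * v x = ∑ x, ψ x * ∑ s ∈ S, v (x - s) := by
        simp_rw [hμ, mul_sum]
        exact sum_congr rfl fun x _ => by ring
    _ = (∑ s ∈ S, ψ s) * ∑ x, ψ x * v x := AddChar.sum_mul_sum_sub ψ S v

theorem two_mul_card_add_one_eq_card {S : Finset G} (h0 : (0 : G) ∉ S)
    (hcompl : ∀ x : G, x ≠ 0 → (x ∉ S ↔ -x ∈ S)) :
    2 * #S + 1 = Fintype.card G := by
  have hdisj : Disjoint S (-S) := by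
    refine disjoint_left.2 fun x hx hnx => ?_
    exact (hcompl x (ne_of_mem_of_not_mem hx h0)).2 (mem_neg'.1 hnx) hx
  have hunion : S ∪ -S = univ.erase 0 := by
    ext x
    by_cases hx : x = 0
    · simp [hx, h0]
    · have := hcompl x hx
      simp only [mem_union, mem_neg', mem_erase, mem_univ, and_true]
      tauto
  have := congrArg card hunion
  rw [card_union_of_disjoint hdisj, card_neg, card_erase_of_mem (mem_univ 0), card_univ] at this
  have := Fintype.card_pos (α := G)
  omega

end AddCommGroup

theorem adjTpm_mulVec_apply (p : ℕ) [NeZero p] (S : Finset (ZMod p)) (v : ZMod p → ℂ)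
    (x : ZMod p) : (adjTpm p S).mulVec v x = ∑ s ∈ S, v (x - s) := by
  rw [Matrix.mulVec, dotProduct, ← Equiv.sum_comp (Equiv.subLeft x)]
  simp [adjTpm, sum_ite_mem]

theorem IsEigenvalue.exists_addChar_eq_sum {p : ℕ} [NeZero p] {S : Finset (ZMod p)} {μ : ℂ}
    (hμ : IsEigenvalue (adjTpm p S) μ) : ∃ ψ : AddChar (ZMod p) ℂ, μ = ∑ s ∈ S, ψ s := by
  obtain ⟨v, hv, hMv⟩ := hμ
  refine exists_addChar_eq_sum_of_sum_sub_eq_mul hv fun x => ?_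
  rw [← adjTpm_mulVec_apply, hMv, Pi.smul_apply, smul_eq_mul]

section FiniteField

variable {F : Type*} [Field F] {S : Finset F} {m : ℕ}

theorem sum_mul_pow_eq_sum {M : Type*} [AddCommMonoid M]
    (hS : ∀ a ∈ S, ∀ x : F, x ≠ 0 → a * x ^ m ∈ S) {x : F} (hx : x ≠ 0) (f : F → M) :
    ∑ a ∈ S, f (a * x ^ m) = ∑ a ∈ S, f a := by
  have hxm : x ^ m ≠ 0 := pow_ne_zero m hx
  refine sum_nbij' (· * x ^ m) (· * (x ^ m)⁻¹) (fun a ha => hS a ha x hx) (fun b hb => ?_)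
    (fun a _ => mul_inv_cancel_right₀ hxm a) (fun b _ => inv_mul_cancel_right₀ hxm b)
    (fun _ _ => rfl)
  simpa [inv_pow] using hS b hb x⁻¹ (inv_ne_zero hx)

theorem sum_sum_mul_pow [Fintype F] {M : Type*} [AddCommMonoid M] (hm : m ≠ 0)
    (hS : ∀ a ∈ S, ∀ x : F, x ≠ 0 → a * x ^ m ∈ S) (f : F → M) :
    ∑ a ∈ S, ∑ x, f (a * x ^ m) = #S • f 0 + (Fintype.card F - 1) • ∑ a ∈ S, f a := by
  rw [sum_comm, ← add_sum_erase _ _ (mem_univ 0),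
    sum_congr rfl fun x hx => sum_mul_pow_eq_sum hS (ne_of_mem_erase hx) f]
  simp [zero_pow hm, card_erase_of_mem]

theorem norm_one_add_two_mul_sum_addChar_le [Fintype F] (hm : m ≠ 0) (h0 : (0 : F) ∉ S)
    (hS : ∀ a ∈ S, ∀ x : F, x ≠ 0 → a * x ^ m ∈ S)
    (hcompl : ∀ x : F, x ≠ 0 → (x ∉ S ↔ -x ∈ S)) (ψ : AddChar F ℂ) {B : ℝ}
    (hB : ∀ a ∈ S, ‖∑ x, ψ (a * x ^ m)‖ ≤ B) :
    ‖1 + 2 * ∑ s ∈ S, ψ s‖ ≤ B := by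
  have hcard := two_mul_card_add_one_eq_card h0 hcompl
  have hpos : 0 < #S := by
    have := Fintype.one_lt_card (α := F)
    omega
  have key : ∑ a ∈ S, ∑ x, ψ (a * x ^ m) = #S * (1 + 2 * ∑ s ∈ S, ψ s) := by
    rw [sum_sum_mul_pow hm hS, ← hcard, Nat.add_sub_cancel]
    simp only [AddChar.map_zero_eq_one, nsmul_eq_mul, mul_one, Nat.cast_mul, Nat.cast_ofNat]
    ring
  have : (#S : ℝ) * ‖1 + 2 * ∑ s ∈ S, ψ s‖ ≤ #S * B := by
    calc (#S : ℝ) * ‖1 + 2 * ∑ s ∈ S, ψ s‖ = ‖∑ a ∈ S, ∑ x, ψ (a * x ^ m)‖ := by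
          rw [key, norm_mul, Complex.norm_natCast]
      _ ≤ ∑ a ∈ S, ‖∑ x, ψ (a * x ^ m)‖ := norm_sum_le _ _
      _ ≤ #S * B := by simpa using sum_le_sum hB
  exact le_of_mul_le_mul_left this (by exact_mod_cast hpos)

end FiniteField

theorem stmt16_general (p m : ℕ) [Fact p.Prime] (hm0 : 0 < m)
    (S : Finset (ZMod p))
    (h0 : (0 : ZMod p) ∉ S)
    (hclosed : ∀ a ∈ S, ∀ x : ZMod p, x ≠ 0 → a * x ^ m ∈ S)
    (hcompl : ∀ x : ZMod p, x ≠ 0 → (x ∉ S ↔ -x ∈ S))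
    (hWeil : ∀ ψ : AddChar (ZMod p) ℂ, ψ ≠ 1 → ∀ a : ZMod p, a ≠ 0 →
      ‖∑ x : ZMod p, ψ (a * x ^ m)‖ ≤ ((m : ℝ) - 1) * Real.sqrt p) :
    (∀ μ : ℂ, IsEigenvalue (adjTpm p S) μ →
      ∃ ψ : AddChar (ZMod p) ℂ, μ = ∑ s ∈ S, ψ s) ∧
    (∀ μ : ℂ, IsEigenvalue (adjTpm p S) μ → μ ≠ ((p : ℂ) - 1) / 2 →
      ‖μ‖ ≤ (((m : ℝ) - 1) * Real.sqrt p + 1) / 2 ∧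
      ‖μ‖ ≤ (m : ℝ) * Real.sqrt p / 2) := by
  refine ⟨fun μ hμ => hμ.exists_addChar_eq_sum, fun μ hμ hμne => ?_⟩
  obtain ⟨ψ, rfl⟩ := hμ.exists_addChar_eq_sum
  have hcard : (p : ℂ) = 2 * #S + 1 := by
    exact_mod_cast (ZMod.card p ▸ two_mul_card_add_one_eq_card h0 hcompl).symm
  have hψ : ψ ≠ 1 := by
    rintro rfl
    apply hμne
    simp [hcard]
  have hWeilS := norm_one_add_two_mul_sum_addChar_le hm0.ne' h0 hclosed hcompl ψ
    fun a ha => hWeil ψ hψ a (ne_of_mem_of_not_mem ha h0)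
  have hnorm : 2 * ‖∑ s ∈ S, ψ s‖ ≤ ‖1 + 2 * ∑ s ∈ S, ψ s‖ + 1 := by
    simpa [norm_mul] using norm_sub_le (1 + 2 * ∑ s ∈ S, ψ s) 1
  have hsqrt : 1 ≤ Real.sqrt p :=
    Real.one_le_sqrt.2 (by exact_mod_cast (Fact.out : p.Prime).one_le)
  have hm1 : (1 : ℝ) ≤ m := by exact_mod_cast hm0
  constructor <;> nlinarith

/-- Every eigenvalue of `T_p^m(S)` is a character sum `Σ_{s∈S} ψ(s)`; consequently,
assuming the Weil bound, `λ(T_p^m(S)) ≤ ((m-1)√p + 1)/2 ≤ m√p/2`. -/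
theorem stmt16 (p m : ℕ) [Fact p.Prime] (hm : Even m) (hm0 : 0 < m)
    (hpm : p ≡ m + 1 [MOD 2 * m])
    (S : Finset (ZMod p))
    (h0 : (0 : ZMod p) ∉ S)
    (hclosed : ∀ a ∈ S, ∀ x : ZMod p, x ≠ 0 → a * x ^ m ∈ S)
    (hcompl : ∀ x : ZMod p, x ≠ 0 → (x ∉ S ↔ -x ∈ S))
    (hWeil : ∀ ψ : AddChar (ZMod p) ℂ, ψ ≠ 1 → ∀ a : ZMod p, a ≠ 0 →
      ‖∑ x : ZMod p, ψ (a * x ^ m)‖ ≤ ((m : ℝ) - 1) * Real.sqrt p) :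
    (∀ μ : ℂ, IsEigenvalue (adjTpm p S) μ →
      ∃ ψ : AddChar (ZMod p) ℂ, μ = ∑ s ∈ S, ψ s) ∧
    (∀ μ : ℂ, IsEigenvalue (adjTpm p S) μ → μ ≠ ((p : ℂ) - 1) / 2 →
      ‖μ‖ ≤ (((m : ℝ) - 1) * Real.sqrt p + 1) / 2 ∧
      ‖μ‖ ≤ (m : ℝ) * Real.sqrt p / 2) :=
  stmt16_general p m hm0 S h0 hclosed hcompl hWeil
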